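/- Let u(ε) ∈ ℂ + H²(ℝ) be a solitary wave solution of the stationary LLE −u'' + ζu − |u|²u + iε(−u + f) = 0 obtained by bifurcation from the rotated NLS soliton (for small ε). Then u(ε) decays exponentially fast to its limit state u_∞(ε) ∈ ℂ as |x| → ∞, i.e., there are constants C, μ > 0 with |u(ε)(x) − u_∞(ε)| ≤ C e^{−μ|x|} for all x ∈ ℝ. -/

import Mathlib

open MeasureTheory Filter Complex

noncomputable section

/-- Hyperbolic secant. -/
def sech (x : ℝ) : ℝ := 1 / Real.cosh x

/-- The rotated bright soliton `φ_θ(x) = √(2ζ) sech(√ζ x) e^{iθ}` of the focusing cubic NLS. -/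
def soliton (ζ θ : ℝ) (x : ℝ) : ℂ :=
  (Real.sqrt (2 * ζ) * sech (Real.sqrt ζ * x) : ℝ) * Complex.exp (θ * Complex.I)

/-- Membership in `H²(ℝ,ℂ)` (classical encoding: twice continuously differentiable with the
function and its first two derivatives square integrable). -/
def IsH2 (u : ℝ → ℂ) : Prop :=
  ContDiff ℝ 2 u ∧ MemLp u 2 volume ∧ MemLp (deriv u) 2 volume ∧
    MemLp (deriv (deriv u)) 2 volume

/-- Membership in `H¹(ℝ,ℂ)` (classical encoding). -/
def IsH1 (u : ℝ → ℂ) : Prop :=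
  ContDiff ℝ 1 u ∧ MemLp u 2 volume ∧ MemLp (deriv u) 2 volume

/-- The `H²` norm (an equivalent version: sum of the `L²` norms of `u`, `u'`, `u''`). -/
def H2norm (u : ℝ → ℂ) : ℝ :=
  (eLpNorm u 2 volume).toReal + (eLpNorm (deriv u) 2 volume).toReal +
    (eLpNorm (deriv (deriv u)) 2 volume).toReal

/-- The `H¹` norm (an equivalent version: sum of the `L²` norms of `u`, `u'`). -/
def H1norm (u : ℝ → ℂ) : ℝ :=
  (eLpNorm u 2 volume).toReal + (eLpNorm (deriv u) 2 volume).toReal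

/-- `u` solves the stationary Lugiato–Lefever equation `-u'' + ζ u - |u|² u + iε(-u + f) = 0`. -/
def SolvesLLE (ζ f ε : ℝ) (u : ℝ → ℂ) : Prop :=
  ∀ x : ℝ, -(deriv (deriv u) x) + (ζ : ℂ) * u x - ‖u x‖^2 * u x
      + (ε : ℂ) * Complex.I * (-(u x) + (f : ℂ)) = 0

/-- The branch of solitary wave solutions of the stationary LLE bifurcating at `ε = 0` from the
rotated NLS soliton `φ_{θ₀}`, as provided by Theorem 1: `u(ε) = φ_{θ(ε)} + u_∞(ε) + φ(ε)` with
real-analytic maps `ε ↦ θ(ε)`, `ε ↦ u_∞(ε)` and `ε ↦ φ(ε) ∈ H²(ℝ)` (the latter given by a power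
series converging in `H²`), `u(0) = φ_{θ₀}` and `‖φ(ε)‖_{H²} = O(|ε|)`. -/
structure BifBranch (ζ f θ₀ : ℝ) where
  εs : ℝ
  εs_pos : 0 < εs
  θfun : ℝ → ℝ
  uinf : ℝ → ℂ
  corr : ℝ → ℝ → ℂ
  θfun_analytic : AnalyticOnNhd ℝ θfun (Set.Ioo (-εs) εs)
  uinf_analytic : AnalyticOnNhd ℝ uinf (Set.Ioo (-εs) εs)
  θfun_zero : θfun 0 = θ₀
  uinf_zero : uinf 0 = 0
  corr_zero : ∀ x, corr 0 x = 0
  uinf_eq : ∀ ε ∈ Set.Ioo (-εs) εs,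
    (ζ : ℂ) * uinf ε - ‖uinf ε‖^2 * uinf ε
      + (ε : ℂ) * Complex.I * (-(uinf ε) + (f : ℂ)) = 0
  corr_H2 : ∀ ε ∈ Set.Ioo (-εs) εs, IsH2 (corr ε)
  corr_series : ∃ a : ℕ → ℝ → ℂ, (∀ n, IsH2 (a n)) ∧
    ∀ ε ∈ Set.Ioo (-εs) εs,
      Tendsto (fun N => H2norm (fun x =>
        corr ε x - ∑ n ∈ Finset.range N, (ε ^ n : ℝ) • a n x)) atTop (nhds 0)
  solves : ∀ ε ∈ Set.Ioo (-εs) εs,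
    SolvesLLE ζ f ε (fun x => soliton ζ (θfun ε) x + uinf ε + corr ε x)
  corr_small : ∃ C > 0, ∀ ε ∈ Set.Ioo (-εs) εs, H2norm (corr ε) ≤ C * |ε|

/-- The solitary wave `u(ε)` of the branch. -/
def BifBranch.wave {ζ f θ₀ : ℝ} (b : BifBranch ζ f θ₀) (ε : ℝ) : ℝ → ℂ :=
  fun x => soliton ζ (b.θfun ε) x + b.uinf ε + b.corr ε x


private lemma hasDerivAt_normSq {v : ℝ → ℂ} {x : ℝ} {d : ℂ} (h : HasDerivAt v d x) :
    HasDerivAt (fun y => Complex.normSq (v y)) (2 * ((starRingEnd ℂ) (v x) * d).re) x := by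
  have hq : HasDerivAt (fun y => (starRingEnd ℂ) (v y) * v y)
      ((starRingEnd ℂ) d * v x + (starRingEnd ℂ) (v x) * d) x := (h.star.mul h)
  have := Complex.reCLM.hasFDerivAt.comp_hasDerivAt x hq
  simp only [Complex.reCLM_apply] at this
  have e1 : (fun y => Complex.normSq (v y))
      = (⇑Complex.reCLM ∘ fun y => (starRingEnd ℂ) (v y) * v y) := by
    funext y
    simp only [Function.comp, Complex.reCLM_apply, Complex.mul_re, Complex.conj_re,
      Complex.conj_im, Complex.normSq_apply]
    ring
  have e2 : 2 * ((starRingEnd ℂ) (v x) * d).re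
      = ((starRingEnd ℂ) d * v x + (starRingEnd ℂ) (v x) * d).re := by
    simp only [Complex.add_re, Complex.mul_re, Complex.conj_re, Complex.conj_im]
    ring
  rw [e1, e2]
  exact this

private lemma mul_L2_integrable {v w : ℝ → ℝ} (h2 : MemLp v 2 volume) (h3 : MemLp w 2 volume) :
    Integrable (fun x => v x * w x) volume := by
  have := h3.smul (φ := v) h2 (p := 2) (q := 2) (r := 1)
  rw [memLp_one_iff_integrable] at this
  exact this

private lemma tendsto_normSq_zero_atTop {v : ℝ → ℂ} (hv : ContDiff ℝ 1 v)
    (h2 : MemLp v 2 volume) (h3 : MemLp (deriv v) 2 volume) :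
    Tendsto (fun x => Complex.normSq (v x)) atTop (nhds 0) := by
  have hvd : Differentiable ℝ v := hv.differentiable one_ne_zero
  have hdc : Continuous (deriv v) := hv.continuous_deriv le_rfl
  set g : ℝ → ℝ := fun x => Complex.normSq (v x) with hgdef
  set g' : ℝ → ℝ := fun x => 2 * ((starRingEnd ℂ) (v x) * deriv v x).re with hg'def
  have hder : ∀ x, HasDerivAt g (g' x) x := fun x => hasDerivAt_normSq (hvd x).hasDerivAt
  have hg'c : Continuous g' :=
    continuous_const.mul (Complex.continuous_re.comp ((Complex.continuous_conj.comp hv.continuous).mul hdc))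
  have hprod : Integrable (fun x => ‖v x‖ * ‖deriv v x‖) volume :=
    mul_L2_integrable h2.norm h3.norm
  have hint : Integrable g' volume := by
    refine ((hprod.const_mul 2).mono' hg'c.aestronglyMeasurable
      (Filter.Eventually.of_forall fun x => ?_))
    have h1 : |((starRingEnd ℂ) (v x) * deriv v x).re| ≤ ‖(starRingEnd ℂ) (v x) * deriv v x‖ :=
      Complex.abs_re_le_norm _
    have h2 : ‖(starRingEnd ℂ) (v x) * deriv v x‖ = ‖v x‖ * ‖deriv v x‖ := by
      rw [norm_mul, RCLike.norm_conj]
    rw [Real.norm_eq_abs, hg'def]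
    calc |2 * ((starRingEnd ℂ) (v x) * deriv v x).re|
        = 2 * |((starRingEnd ℂ) (v x) * deriv v x).re| := by rw [abs_mul]; norm_num
      _ ≤ 2 * (‖v x‖ * ‖deriv v x‖) := by rw [← h2]; linarith
  have hftc : ∀ b : ℝ, ∫ t in (0:ℝ)..b, g' t = g b - g 0 := fun b =>
    intervalIntegral.integral_eq_sub_of_hasDerivAt (fun t _ => hder t)
      (hg'c.intervalIntegrable 0 b)
  have hglim : Tendsto g atTop (nhds ((∫ t in Set.Ioi (0:ℝ), g' t) + g 0)) := by
    have h := intervalIntegral_tendsto_integral_Ioi 0 hint.integrableOn tendsto_id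
    have h2' : Tendsto (fun b => g b - g 0) atTop (nhds (∫ t in Set.Ioi (0:ℝ), g' t)) := by
      refine h.congr fun b => ?_
      exact hftc b
    have := h2'.add_const (g 0)
    simpa using this
  set L : ℝ := (∫ t in Set.Ioi (0:ℝ), g' t) + g 0 with hL
  have hgint : Integrable g volume := by
    have : Integrable (fun x => ‖v x‖ * ‖v x‖) volume := mul_L2_integrable h2.norm h2.norm
    refine this.congr (Filter.Eventually.of_forall fun x => ?_)
    rw [hgdef]; simp [Complex.normSq_eq_norm_sq, sq]
  have hLnonneg : 0 ≤ L :=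
    ge_of_tendsto hglim (Filter.Eventually.of_forall fun x => Complex.normSq_nonneg _)
  have hL0 : L = 0 := by
    by_contra hne
    have hLpos : 0 < L := lt_of_le_of_ne hLnonneg (Ne.symm hne)
    have hev : ∀ᶠ x in atTop, L / 2 < g x := by
      have := hglim.eventually (eventually_gt_nhds (by linarith : L / 2 < L))
      exact this
    obtain ⟨T, hT⟩ := hev.exists_forall_of_atTop
    have hfin : (∫⁻ x, ENNReal.ofReal (g x) ∂volume) < ⊤ := by
      rw [← hasFiniteIntegral_iff_ofReal (Filter.Eventually.of_forall fun x =>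
        Complex.normSq_nonneg _)]
      exact hgint.hasFiniteIntegral
    have hbound : (∫⁻ x in Set.Ici T, ENNReal.ofReal (L / 2) ∂volume)
        ≤ ∫⁻ x in Set.Ici T, ENNReal.ofReal (g x) ∂volume := by
      refine setLIntegral_mono' measurableSet_Ici fun x hx => ?_
      exact ENNReal.ofReal_le_ofReal (le_of_lt (hT x hx))
    rw [setLIntegral_const] at hbound
    rw [Real.volume_Ici, ENNReal.mul_top] at hbound
    · have := lt_of_le_of_lt (hbound.trans (setLIntegral_le_lintegral _ _)) hfin
      simp at this
    · simp [ENNReal.ofReal_eq_zero]; linarith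
  rw [hL0] at hglim
  exact hglim


private lemma monoIci {f f' : ℝ → ℝ} (h : ∀ x, HasDerivAt f (f' x) x) {a : ℝ}
    (h0 : ∀ x, a ≤ x → 0 ≤ f' x) : MonotoneOn f (Set.Ici a) := by
  refine monotoneOn_of_deriv_nonneg (convex_Ici a)
    (fun x _ => (h x).continuousAt.continuousWithinAt)
    (fun x hx => (h x).differentiableAt.differentiableWithinAt) ?_
  intro x hx
  rw [interior_Ici] at hx
  rw [(h x).deriv]
  exact h0 x hx.le

private lemma antiIci {f f' : ℝ → ℝ} (h : ∀ x, HasDerivAt f (f' x) x) {a : ℝ}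
    (h0 : ∀ x, a ≤ x → f' x ≤ 0) : AntitoneOn f (Set.Ici a) := by
  refine antitoneOn_of_deriv_nonpos (convex_Ici a)
    (fun x _ => (h x).continuousAt.continuousWithinAt)
    (fun x hx => (h x).differentiableAt.differentiableWithinAt) ?_
  intro x hx
  rw [interior_Ici] at hx
  rw [(h x).deriv]
  exact h0 x hx.le

private lemma decay_of_diff_ineq {g : ℝ → ℝ} {R m : ℝ} (hm : 0 < m)
    (hg : ContDiff ℝ 2 g) (hg0 : ∀ x, 0 ≤ g x)
    (hineq : ∀ x, R ≤ x → m * g x ≤ deriv (deriv g) x)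
    (hlim : Tendsto g atTop (nhds 0)) :
    ∀ x, R ≤ x → g x ≤ g R * Real.exp (-(Real.sqrt m) * (x - R)) := by
  have hdg : Differentiable ℝ g := hg.differentiable (by norm_num)
  have hdg1 : Differentiable ℝ (deriv g) := by
    have h := (contDiff_succ_iff_deriv (n := 1)).mp (by exact_mod_cast hg)
    exact h.2.2.differentiable one_ne_zero
  set g1 := deriv g with hg1def
  set g2 := deriv (deriv g) with hg2def
  have hd : ∀ x, HasDerivAt g (g1 x) x := fun x => (hdg x).hasDerivAt
  have hd1 : ∀ x, HasDerivAt g1 (g2 x) x := fun x => (hdg1 x).hasDerivAt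
  set s := Real.sqrt m with hsdef
  have hs : 0 < s := Real.sqrt_pos.mpr hm
  have hss : s * s = m := Real.mul_self_sqrt hm.le
  -- Step 1 : g1 ≤ 0 on [R, ∞)
  have hstep1 : ∀ p, R ≤ p → g1 p ≤ 0 := by
    intro p hp
    by_contra hpos
    push_neg at hpos
    have hmono : MonotoneOn g1 (Set.Ici p) :=
      monoIci hd1 (fun x hx => le_trans (mul_nonneg hm.le (hg0 x)) (hineq x (hp.trans hx)))
    have hlin : ∀ x, p ≤ x → g p + g1 p * (x - p) ≤ g x := by
      intro x hx
      have hmono2 : MonotoneOn (fun y => g y - g1 p * y) (Set.Ici p) := by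
        refine monoIci (f' := fun y => g1 y - g1 p) (fun y => ?_) (fun y hy => ?_)
        · exact ((hd y).sub ((hasDerivAt_id y).const_mul (g1 p))).congr_deriv (by simp)
        · simpa using sub_nonneg.mpr (hmono Set.self_mem_Ici hy hy)
      have := hmono2 (Set.self_mem_Ici) hx hx
      simp only at this
      nlinarith
    have htop : Tendsto g atTop atTop := by
      refine tendsto_atTop_mono' atTop
        (f₁ := fun x => g p + g1 p * (x - p))
        (by filter_upwards [eventually_ge_atTop p] with x hx using hlin x hx) ?_
      apply tendsto_atTop_add_const_left
      have hsub : Tendsto (fun x : ℝ => x - p) atTop atTop :=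
        tendsto_atTop_add_const_right atTop (-p) tendsto_id
      exact hsub.const_mul_atTop hpos
    exact not_tendsto_atTop_of_tendsto_nhds hlim htop
  -- Step 2 : F := g1 + s•g ≤ 0 on [R, ∞)
  have hstep2 : ∀ p, R ≤ p → g1 p + s * g p ≤ 0 := by
    intro p hp
    by_contra hpos
    push_neg at hpos
    set F : ℝ → ℝ := fun x => g1 x + s * g x with hFdef
    have hdF : ∀ x, HasDerivAt F (g2 x + s * g1 x) x :=
      fun x => (hd1 x).add ((hd x).const_mul s)
    set G : ℝ → ℝ := fun x => F x * Real.exp (-s * x) with hGdef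
    have hdG : ∀ x, HasDerivAt G ((g2 x - m * g x) * Real.exp (-s * x)) x := by
      intro x
      have he : HasDerivAt (fun y => Real.exp (-s * y)) (-s * Real.exp (-s * x)) x := by
        have h0 : HasDerivAt (fun y : ℝ => -s * y) (-s) x := by
          simpa using (hasDerivAt_id x).const_mul (-s)
        convert h0.exp using 1
        ring
      have := (hdF x).mul he
      refine this.congr_deriv ?_
      have : g2 x * Real.exp (-s * x) + s * g1 x * Real.exp (-s * x)
          - s * s * g x * Real.exp (-s * x) - s * g1 x * Real.exp (-s * x)
          = (g2 x + s * g1 x) * Real.exp (-s * x) + F x * (-s * Real.exp (-s * x)) := by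
        rw [hFdef]; ring
      rw [← hss]; rw [← this]; ring
    have hmonoG : MonotoneOn G (Set.Ici p) := by
      refine monoIci hdG (fun x hx => mul_nonneg ?_ (Real.exp_pos _).le)
      have := hineq x (hp.trans hx)
      linarith
    have hGp : 0 < G p := mul_pos hpos (Real.exp_pos _)
    -- eventually s * g x < G p, x ≥ p, 0 ≤ x : contradiction
    have hsg : Tendsto (fun x => s * g x) atTop (nhds 0) := by
      simpa using hlim.const_mul s
    have hev : ∀ᶠ x in atTop, s * g x < G p := hsg.eventually (eventually_lt_nhds hGp)
    obtain ⟨x, ⟨hx1, hx2⟩, hx3⟩ := ((hev.and (eventually_ge_atTop p)).and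
      (eventually_ge_atTop (0:ℝ))).exists
    have h1 : G p ≤ G x := hmonoG Set.self_mem_Ici hx2 hx2
    have h2 : G x ≤ s * g x := by
      have hF : F x ≤ s * g x := by
        have := hstep1 x (hp.trans hx2)
        simp only [hFdef]; linarith
      have hexp : Real.exp (-s * x) ≤ 1 := by
        rw [Real.exp_le_one_iff]
        nlinarith
      calc G x = F x * Real.exp (-s * x) := rfl
        _ ≤ s * g x * Real.exp (-s * x) := by
            apply mul_le_mul_of_nonneg_right hF (Real.exp_pos _).le
        _ ≤ s * g x * 1 := by
            apply mul_le_mul_of_nonneg_left hexp (mul_nonneg hs.le (hg0 x))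
        _ = s * g x := by ring
    linarith
  -- Step 3 : conclude via antitonicity of g x * exp (s x)
  intro x hx
  have hH : ∀ y, HasDerivAt (fun z => g z * Real.exp (s * z))
      ((g1 y + s * g y) * Real.exp (s * y)) y := by
    intro y
    have he : HasDerivAt (fun z => Real.exp (s * z)) (s * Real.exp (s * y)) y := by
      have h0 : HasDerivAt (fun z : ℝ => s * z) s y := by
        simpa using (hasDerivAt_id y).const_mul s
      convert h0.exp using 1
      ring
    have := (hd y).mul he
    refine this.congr_deriv ?_
    ring
  have hanti : AntitoneOn (fun z => g z * Real.exp (s * z)) (Set.Ici R) :=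
    antiIci hH (fun y hy => mul_nonpos_of_nonpos_of_nonneg (hstep2 y hy) (Real.exp_pos _).le)
  have h1 : g x * Real.exp (s * x) ≤ g R * Real.exp (s * R) :=
    hanti Set.self_mem_Ici hx hx
  have h2 : g x ≤ g R * Real.exp (s * R) / Real.exp (s * x) := by
    rw [le_div_iff₀ (Real.exp_pos _)]
    exact h1
  calc g x ≤ g R * Real.exp (s * R) / Real.exp (s * x) := h2
    _ = g R * Real.exp (-s * (x - R)) := by
        rw [mul_div_assoc, ← Real.exp_sub]
        ring_nf

private lemma soliton_contDiff (ζ θ : ℝ) : ContDiff ℝ 2 (soliton ζ θ) := by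
  have hcosh : ContDiff ℝ 2 fun x : ℝ => Real.cosh (Real.sqrt ζ * x) :=
    Real.contDiff_cosh.comp (contDiff_const.mul contDiff_id)
  have hsech : ContDiff ℝ 2 fun x : ℝ =>
      Real.sqrt (2 * ζ) * sech (Real.sqrt ζ * x) := by
    refine contDiff_const.mul ?_
    simp only [sech]
    exact contDiff_const.div hcosh (fun x => (Real.cosh_pos _).ne')
  have h1 : ContDiff ℝ 2 fun x : ℝ =>
      ((Real.sqrt (2 * ζ) * sech (Real.sqrt ζ * x) : ℝ) : ℂ) :=
    Complex.ofRealCLM.contDiff.comp hsech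
  exact h1.mul contDiff_const

private lemma soliton_norm (ζ θ x : ℝ) :
    ‖soliton ζ θ x‖ = Real.sqrt (2 * ζ) * (1 / Real.cosh (Real.sqrt ζ * x)) := by
  simp only [soliton, sech, norm_mul]
  rw [Complex.norm_real]
  have h1 : ‖Complex.exp (θ * Complex.I)‖ = 1 := by
    rw [Complex.norm_exp]
    simp
  rw [h1, mul_one, Real.norm_eq_abs, _root_.abs_of_nonneg]
  positivity

private lemma cosh_comp_tendsto_atTop (k : ℝ) (hk : 0 < k) :
    Tendsto (fun x : ℝ => Real.cosh (k * x)) atTop atTop := by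
  have hlow : ∀ x : ℝ, Real.exp (k * x) / 2 ≤ Real.cosh (k * x) := by
    intro x
    rw [Real.cosh_eq]
    have := Real.exp_pos (-(k * x))
    linarith
  refine tendsto_atTop_mono hlow ?_
  exact (Real.tendsto_exp_atTop.comp (tendsto_id.const_mul_atTop hk)).atTop_div_const two_pos

private lemma cosh_comp_tendsto_atBot (k : ℝ) (hk : 0 < k) :
    Tendsto (fun x : ℝ => Real.cosh (k * x)) atBot atTop := by
  have hlow : ∀ x : ℝ, Real.exp (-(k * x)) / 2 ≤ Real.cosh (k * x) := by
    intro x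
    rw [Real.cosh_eq]
    have := Real.exp_pos (k * x)
    linarith
  refine tendsto_atTop_mono hlow ?_
  have hneg : Tendsto (fun x : ℝ => -(k * x)) atBot atTop :=
    tendsto_neg_atBot_atTop.comp (tendsto_id.const_mul_atBot hk)
  exact (Real.tendsto_exp_atTop.comp hneg).atTop_div_const two_pos

private lemma soliton_tendsto_atTop (ζ θ : ℝ) (hζ : 0 < ζ) :
    Tendsto (soliton ζ θ) atTop (nhds 0) := by
  rw [tendsto_zero_iff_norm_tendsto_zero]
  have h0 : Tendsto (fun x : ℝ => (Real.cosh (Real.sqrt ζ * x))⁻¹) atTop (nhds 0) :=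
    (cosh_comp_tendsto_atTop _ (Real.sqrt_pos.mpr hζ)).inv_tendsto_atTop
  have := h0.const_mul (Real.sqrt (2 * ζ))
  rw [mul_zero] at this
  refine this.congr fun x => ?_
  rw [soliton_norm]
  ring

private lemma soliton_tendsto_atBot (ζ θ : ℝ) (hζ : 0 < ζ) :
    Tendsto (soliton ζ θ) atBot (nhds 0) := by
  rw [tendsto_zero_iff_norm_tendsto_zero]
  have h0 : Tendsto (fun x : ℝ => (Real.cosh (Real.sqrt ζ * x))⁻¹) atBot (nhds 0) :=
    (cosh_comp_tendsto_atBot _ (Real.sqrt_pos.mpr hζ)).inv_tendsto_atTop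
  have := h0.const_mul (Real.sqrt (2 * ζ))
  rw [mul_zero] at this
  refine this.congr fun x => ?_
  rw [soliton_norm]
  ring

private lemma cubic_diff_bound (z c : ℂ) :
    ‖((‖z + c‖)^2 : ℝ) * (z + c) - ((‖c‖)^2 : ℝ) * c‖
      ≤ ((‖z + c‖)^2 + ‖z + c‖ * ‖c‖ + (‖c‖)^2)
        * ‖z‖ := by
  have key : (((‖z + c‖)^2 : ℝ) : ℂ) * (z + c) - (((‖c‖)^2 : ℝ) : ℂ) * c
      = (((‖z + c‖)^2 : ℝ) : ℂ) * z
        + ((((‖z + c‖)^2 - (‖c‖)^2 : ℝ)) : ℂ) * c := by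
    push_cast
    ring
  rw [key]
  have h1 := norm_add_le ((((‖z + c‖)^2 : ℝ) : ℂ) * z)
    (((((‖z + c‖)^2 - (‖c‖)^2 : ℝ)) : ℂ) * c)
  have h2 : ‖(((‖z + c‖)^2 : ℝ) : ℂ) * z‖
      = (‖z + c‖)^2 * ‖z‖ := by
    rw [norm_mul, Complex.norm_real, Real.norm_eq_abs, _root_.abs_of_nonneg (sq_nonneg _)]
  have h3 : ‖((((‖z + c‖)^2 - (‖c‖)^2 : ℝ)) : ℂ) * c‖
      = |(‖z + c‖)^2 - (‖c‖)^2| * ‖c‖ := by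
    rw [norm_mul, Complex.norm_real, Real.norm_eq_abs]
  have h4 : |‖z + c‖ - ‖c‖| ≤ ‖z‖ := by
    have := abs_norm_sub_norm_le (z + c) c
    simpa using this
  have h5 : |(‖z + c‖)^2 - (‖c‖)^2|
      ≤ (‖z + c‖ + ‖c‖) * ‖z‖ := by
    have hfact : (‖z + c‖)^2 - (‖c‖)^2
        = (‖z + c‖ + ‖c‖) * (‖z + c‖ - ‖c‖) := by ring
    rw [hfact, abs_mul, _root_.abs_of_nonneg (by positivity : (0:ℝ) ≤ ‖z + c‖ + ‖c‖)]
    exact mul_le_mul_of_nonneg_left h4 (by positivity)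
  have hz := norm_nonneg z
  have hc := norm_nonneg c
  nlinarith [norm_nonneg (z + c)]

private lemma deriv2_comp_neg (g : ℝ → ℝ) (x : ℝ) :
    deriv (deriv (fun y => g (-y))) x = deriv (deriv g) (-x) := by
  have h1 : (deriv fun y => g (-y)) = fun y => -(deriv g (-y)) :=
    funext fun y => deriv_comp_neg g y
  rw [h1, deriv.fun_neg, deriv_comp_neg, neg_neg]


private lemma tendsto_zero_of_H1_atTop {v : ℝ → ℂ} (hv : ContDiff ℝ 1 v)
    (h2 : MemLp v 2 volume) (h3 : MemLp (deriv v) 2 volume) :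
    Tendsto v atTop (nhds 0) := by
  have h := tendsto_normSq_zero_atTop hv h2 h3
  rw [tendsto_zero_iff_norm_tendsto_zero]
  have hs : Tendsto (fun x => Real.sqrt (Complex.normSq (v x))) atTop (nhds 0) := by
    have := (Real.continuous_sqrt.tendsto 0).comp h
    rw [Real.sqrt_zero] at this
    exact this
  refine hs.congr fun x => ?_
  rw [Complex.norm_def]

private lemma tendsto_zero_of_H1_atBot {v : ℝ → ℂ} (hv : ContDiff ℝ 1 v)
    (h2 : MemLp v 2 volume) (h3 : MemLp (deriv v) 2 volume) :
    Tendsto v atBot (nhds 0) := by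
  have hmp : MeasurePreserving (fun x : ℝ => -x) volume volume :=
    Measure.measurePreserving_neg _
  have hvnC : ContDiff ℝ 1 (fun x => v (-x)) := hv.comp (contDiff_id.neg)
  have hvn2 : MemLp (fun x => v (-x)) 2 volume := h2.comp_measurePreserving hmp
  have hdvn : deriv (fun x => v (-x)) = fun x => -(deriv v (-x)) :=
    funext fun x => deriv_comp_neg v x
  have hvn3 : MemLp (deriv (fun x => v (-x))) 2 volume := by
    rw [hdvn]
    exact (h3.comp_measurePreserving hmp).neg
  have htop := tendsto_zero_of_H1_atTop hvnC hvn2 hvn3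
  have hcomp := htop.comp (tendsto_neg_atBot_atTop (G := ℝ))
  refine hcomp.congr fun x => ?_
  simp [Function.comp]

/-- **Corollary (exponential decay of the solitary waves).**
The bifurcating solitary wave solutions `u(ε) ∈ ℂ + H²(ℝ)` of the stationary LLE decay
exponentially fast to their limit states `u_∞(ε) ∈ ℂ` as `|x| → ∞`. -/
theorem exponential_decay_of_waves (ζ f θ₀ : ℝ) (hζ : 0 < ζ) (hf : 0 < f)
    (hzero : Real.pi * f * Real.cos θ₀ - 2 * Real.sqrt (2 * ζ) = 0)
    (hsin : Real.sin θ₀ ≠ 0) (b : BifBranch ζ f θ₀) :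
    ∃ ε₀ > 0, ∀ ε : ℝ, |ε| < ε₀ →
      ∃ C > 0, ∃ μ > 0, ∀ x : ℝ,
        ‖b.wave ε x - b.uinf ε‖ ≤ C * Real.exp (-μ * |x|) := by
  have ht : (0:ℝ) < min 1 (ζ / 14) := lt_min one_pos (by positivity)
  set t := min 1 (ζ / 14) with htdef
  have ht1 : t ≤ 1 := min_le_left _ _
  have ht2 : t ≤ ζ / 14 := min_le_right _ _
  have h0mem : (0:ℝ) ∈ Set.Ioo (-b.εs) b.εs := ⟨by linarith [b.εs_pos], b.εs_pos⟩
  have hcont : ContinuousAt b.uinf 0 := (b.uinf_analytic 0 h0mem).continuousAt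
  rw [Metric.continuousAt_iff] at hcont
  obtain ⟨ε₁, hε₁pos, hball⟩ := hcont t ht
  refine ⟨min b.εs ε₁, lt_min b.εs_pos hε₁pos, fun ε hε => ?_⟩
  have hεs : |ε| < b.εs := lt_of_lt_of_le hε (min_le_left _ _)
  have hεIoo : ε ∈ Set.Ioo (-b.εs) b.εs := by
    rw [Set.mem_Ioo]
    exact ⟨by linarith [(abs_lt.mp hεs).1], (abs_lt.mp hεs).2⟩
  have hcb : ‖b.uinf ε‖ < t := by
    have hd : dist ε 0 < ε₁ := by
      rw [Real.dist_eq, sub_zero]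
      exact lt_of_lt_of_le hε (min_le_right _ _)
    have h := hball hd
    rw [b.uinf_zero, Complex.dist_eq, sub_zero] at h
    exact h
  set c : ℂ := b.uinf ε with hcdef
  set w : ℝ → ℂ := fun x => soliton ζ (b.θfun ε) x + b.corr ε x with hwdef
  have hwave : ∀ x, b.wave ε x - b.uinf ε = w x := by
    intro x
    simp only [BifBranch.wave, hwdef, hcdef]
    ring
  obtain ⟨hc2, hcL2, hcL2', -⟩ := b.corr_H2 ε hεIoo
  have hw2 : ContDiff ℝ 2 w := (soliton_contDiff ζ _).add hc2
  have hcorrTop : Tendsto (b.corr ε) atTop (nhds 0) :=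
    tendsto_zero_of_H1_atTop (hc2.of_le (by norm_num)) hcL2 hcL2'
  have hcorrBot : Tendsto (b.corr ε) atBot (nhds 0) :=
    tendsto_zero_of_H1_atBot (hc2.of_le (by norm_num)) hcL2 hcL2'
  have hwTop : Tendsto w atTop (nhds 0) := by
    have := (soliton_tendsto_atTop ζ (b.θfun ε) hζ).add hcorrTop
    simpa using this
  have hwBot : Tendsto w atBot (nhds 0) := by
    have := (soliton_tendsto_atBot ζ (b.θfun ε) hζ).add hcorrBot
    simpa using this
  set g : ℝ → ℝ := fun x => Complex.normSq (w x) with hgdef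
  have hgC : ContDiff ℝ 2 g := by
    have hre : ContDiff ℝ 2 fun x => (w x).re := Complex.reCLM.contDiff.comp hw2
    have him : ContDiff ℝ 2 fun x => (w x).im := Complex.imCLM.contDiff.comp hw2
    have h1 : ContDiff ℝ 2 fun x => (w x).re * (w x).re + (w x).im * (w x).im :=
      (hre.mul hre).add (him.mul him)
    have hEq : g = fun x => (w x).re * (w x).re + (w x).im * (w x).im :=
      funext fun x => by simp [hgdef, Complex.normSq_apply]
    rw [hEq]
    exact h1
  have hg0 : ∀ x, 0 ≤ g x := fun x => Complex.normSq_nonneg _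
  have hgTop : Tendsto g atTop (nhds 0) := by
    have := (Complex.continuous_normSq.tendsto 0).comp hwTop
    rw [map_zero] at this
    exact this
  have hgBot : Tendsto g atBot (nhds 0) := by
    have := (Complex.continuous_normSq.tendsto 0).comp hwBot
    rw [map_zero] at this
    exact this
  have hwd : Differentiable ℝ w := hw2.differentiable (by norm_num)
  have hwd1 : Differentiable ℝ (deriv w) := by
    have h := (contDiff_succ_iff_deriv (n := 1)).mp (by exact_mod_cast hw2)
    exact h.2.2.differentiable one_ne_zero
  have hODE : ∀ x, deriv (deriv w) x = (ζ:ℂ) * w x - (ε:ℂ) * Complex.I * w x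
      - (((‖w x + c‖)^2 : ℝ) * (w x + c) - ((‖c‖)^2 : ℝ) * c) := by
    intro x
    have hsol := b.solves ε hεIoo x
    have hinf := b.uinf_eq ε hεIoo
    have hUeq : (fun y => soliton ζ (b.θfun ε) y + b.uinf ε + b.corr ε y)
        = fun y => w y + c := funext fun y => by simp only [hwdef, hcdef]; ring
    rw [hUeq] at hsol
    have hdeq : (deriv fun y => w y + c) = deriv w := funext fun y => deriv_add_const c
    rw [show (deriv (deriv fun y => w y + c)) = deriv (deriv w) from by rw [hdeq]] at hsol
    simp only at hsol
    push_cast at hsol ⊢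
    linear_combination hinf - hsol
  have hg1 : ∀ x, HasDerivAt g (2 * ((starRingEnd ℂ) (w x) * deriv w x).re) x :=
    fun x => hasDerivAt_normSq (hwd x).hasDerivAt
  have hgd : deriv g = fun x => 2 * ((starRingEnd ℂ) (w x) * deriv w x).re :=
    funext fun x => (hg1 x).deriv
  have hg2 : ∀ x, deriv (deriv g) x
      = 2 * ((starRingEnd ℂ) (deriv w x) * deriv w x
          + (starRingEnd ℂ) (w x) * deriv (deriv w) x).re := by
    intro x
    rw [hgd]
    have hq : HasDerivAt (fun y => (starRingEnd ℂ) (w y) * deriv w y)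
        ((starRingEnd ℂ) (deriv w x) * deriv w x
          + (starRingEnd ℂ) (w x) * deriv (deriv w) x) x :=
      ((hwd x).hasDerivAt.star.mul (hwd1 x).hasDerivAt)
    have h2 := Complex.reCLM.hasFDerivAt.comp_hasDerivAt x hq
    simp only [Complex.reCLM_apply] at h2
    exact (h2.const_mul 2).deriv
  have hpt : ∀ x, ‖w x‖ ≤ t → ζ * g x ≤ deriv (deriv g) x := by
    intro x hx
    rw [hg2 x, Complex.add_re]
    have hgx : g x = Complex.normSq (w x) := rfl
    have hN : ‖((‖w x + c‖)^2 : ℝ) * (w x + c)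
        - ((‖c‖)^2 : ℝ) * c‖ ≤ (ζ/2) * ‖w x‖ := by
      have hb := cubic_diff_bound (w x) c
      have h1 : ‖w x + c‖ ≤ 2 * t :=
        le_trans (norm_add_le _ _) (by linarith [hcb.le])
      have hzn := norm_nonneg (w x)
      have hcn := norm_nonneg c
      have han := norm_nonneg (w x + c)
      have hK : (‖w x + c‖)^2 + ‖w x + c‖ * ‖c‖
          + (‖c‖)^2 ≤ ζ/2 := by
        nlinarith [mul_le_mul h1 h1 han (by positivity : (0:ℝ) ≤ 2*t),
          mul_le_mul hcb.le hcb.le hcn ht.le,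
          mul_le_mul h1 hcb.le hcn (by positivity : (0:ℝ) ≤ 2*t),
          mul_le_mul_of_nonneg_left ht1 ht.le, ht2, ht.le]
      calc ‖((‖w x + c‖)^2 : ℝ) * (w x + c)
              - ((‖c‖)^2 : ℝ) * c‖
          ≤ ((‖w x + c‖)^2 + ‖w x + c‖ * ‖c‖
              + (‖c‖)^2) * ‖w x‖ := hb
        _ ≤ (ζ/2) * ‖w x‖ := mul_le_mul_of_nonneg_right hK hzn
    have hre1 : ((starRingEnd ℂ) (w x) * deriv (deriv w) x).re
        = ζ * Complex.normSq (w x)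
          - ((starRingEnd ℂ) (w x) * (((‖w x + c‖)^2 : ℝ) * (w x + c)
              - ((‖c‖)^2 : ℝ) * c)).re := by
      rw [hODE x]
      simp [Complex.mul_re, Complex.mul_im, Complex.normSq_apply]
      ring
    have habs : |((starRingEnd ℂ) (w x) * (((‖w x + c‖)^2 : ℝ) * (w x + c)
        - ((‖c‖)^2 : ℝ) * c)).re| ≤ (ζ/2) * Complex.normSq (w x) := by
      have h1 := Complex.abs_re_le_norm ((starRingEnd ℂ) (w x)
        * (((‖w x + c‖)^2 : ℝ) * (w x + c) - ((‖c‖)^2 : ℝ) * c))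
      rw [norm_mul, RCLike.norm_conj] at h1
      calc |((starRingEnd ℂ) (w x) * (((‖w x + c‖)^2 : ℝ) * (w x + c)
              - ((‖c‖)^2 : ℝ) * c)).re|
          ≤ ‖w x‖ * ‖((‖w x + c‖)^2 : ℝ) * (w x + c)
              - ((‖c‖)^2 : ℝ) * c‖ := h1
        _ ≤ ‖w x‖ * ((ζ/2) * ‖w x‖) :=
            mul_le_mul_of_nonneg_left hN (norm_nonneg _)
        _ = (ζ/2) * (‖w x‖)^2 := by ring
        _ = (ζ/2) * Complex.normSq (w x) := by rw [Complex.sq_norm]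
    have hpos : 0 ≤ ((starRingEnd ℂ) (deriv w x) * deriv w x).re := by
      have h1 : ((starRingEnd ℂ) (deriv w x) * deriv w x).re
          = (deriv w x).re ^ 2 + (deriv w x).im ^ 2 := by
        simp [Complex.mul_re]
        ring
      rw [h1]
      positivity
    have h2 := abs_le.mp habs
    rw [hgx]
    linarith [hre1, h2.1]
  have hnT : Tendsto (fun x => ‖w x‖) atTop (nhds 0) := by
    have := hwTop.norm
    simpa using this
  have hnB : Tendsto (fun x => ‖w x‖) atBot (nhds 0) := by
    have := hwBot.norm
    simpa using this
  obtain ⟨T₁, hT₁⟩ := eventually_atTop.mp (hnT.eventually (eventually_le_nhds ht))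
  obtain ⟨T₂, hT₂⟩ := eventually_atBot.mp (hnB.eventually (eventually_le_nhds ht))
  set R : ℝ := max 0 (max T₁ (-T₂)) with hRdef
  have hR0 : (0:ℝ) ≤ R := le_max_left _ _
  have hRT₁ : T₁ ≤ R := le_trans (le_max_left _ _) (le_max_right _ _)
  have hRT₂ : -T₂ ≤ R := le_trans (le_max_right _ _) (le_max_right _ _)
  have hdecR : ∀ x, R ≤ x → g x ≤ g R * Real.exp (-(Real.sqrt ζ) * (x - R)) :=
    decay_of_diff_ineq hζ hgC hg0 (fun x hx => hpt x (hT₁ x (le_trans hRT₁ hx))) hgTop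
  have hgnC : ContDiff ℝ 2 (fun x => g (-x)) := hgC.comp (contDiff_id.neg)
  have hgnTop : Tendsto (fun x => g (-x)) atTop (nhds 0) :=
    hgBot.comp (tendsto_neg_atTop_atBot : Tendsto (fun x : ℝ => -x) atTop atBot)
  have hdecL : ∀ x, R ≤ x → g (-x) ≤ g (-R) * Real.exp (-(Real.sqrt ζ) * (x - R)) := by
    refine decay_of_diff_ineq hζ hgnC (fun x => hg0 _) (fun x hx => ?_) hgnTop
    rw [deriv2_comp_neg]
    exact hpt (-x) (hT₂ (-x) (by linarith))
  set s := Real.sqrt ζ with hsdef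
  have hspos : 0 < s := Real.sqrt_pos.mpr hζ
  set μ := s / 2 with hμdef
  have hμpos : 0 < μ := by positivity
  obtain ⟨M, hM⟩ := (isCompact_Icc (a := -R) (b := R)).exists_bound_of_continuousOn
    (hw2.continuous.continuousOn)
  set A := max (g R) (g (-R)) with hAdef
  have hA0 : 0 ≤ A := le_trans (hg0 R) (le_max_left _ _)
  set C := (Real.sqrt A + max M 0 + 1) * Real.exp (μ * R) with hCdef
  have hCpos : 0 < C := by
    have := Real.sqrt_nonneg A
    have := le_max_right M 0
    positivity
  refine ⟨C, hCpos, μ, hμpos, fun x => ?_⟩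
  rw [hwave x]
  rcases le_or_gt |x| R with hcase | hcase
  · have hxmem : x ∈ Set.Icc (-R) R := by
      rw [Set.mem_Icc]
      exact ⟨by linarith [(abs_le.mp hcase).1], (abs_le.mp hcase).2⟩
    have h1 : ‖w x‖ ≤ max M 0 := by
      refine le_trans ?_ (le_max_left M 0)
      exact hM x hxmem
    have h3 : (1:ℝ) ≤ Real.exp (μ * (R - |x|)) := by
      rw [Real.one_le_exp_iff]
      have : 0 ≤ R - |x| := by linarith
      positivity
    have h4 : C * Real.exp (-μ * |x|)
        = (Real.sqrt A + max M 0 + 1) * Real.exp (μ * (R - |x|)) := by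
      rw [hCdef, mul_assoc, ← Real.exp_add]
      ring_nf
    calc ‖w x‖ ≤ max M 0 := h1
      _ ≤ max M 0 * Real.exp (μ * (R - |x|)) :=
          le_mul_of_one_le_right (le_max_right M 0) h3
      _ ≤ (Real.sqrt A + max M 0 + 1) * Real.exp (μ * (R - |x|)) :=
          mul_le_mul_of_nonneg_right (by linarith [Real.sqrt_nonneg A])
            (Real.exp_pos _).le
      _ = C * Real.exp (-μ * |x|) := h4.symm
  · have hgb : g x ≤ A * Real.exp (-s * (|x| - R)) := by
      rcases abs_cases x with ⟨hax, hsign⟩ | ⟨hax, hsign⟩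
      · rw [hax]
        refine le_trans (hdecR x (by linarith)) ?_
        exact mul_le_mul_of_nonneg_right (le_max_left _ _) (Real.exp_pos _).le
      · have h5 := hdecL (-x) (by rw [hax] at hcase; linarith)
        rw [neg_neg] at h5
        rw [hax]
        exact le_trans h5 (mul_le_mul_of_nonneg_right (le_max_right _ _) (Real.exp_pos _).le)
    have h1 : ‖w x‖ = Real.sqrt (g x) := by
      rw [Complex.norm_def]
    have h2 : Real.sqrt (g x) ≤ Real.sqrt (A * Real.exp (-s * (|x| - R))) :=
      Real.sqrt_le_sqrt hgb
    have h3 : Real.sqrt (A * Real.exp (-s * (|x| - R)))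
        = Real.sqrt A * Real.exp ((-s * (|x| - R))/2) := by
      rw [Real.sqrt_mul hA0, ← Real.exp_half]
    have h4 : Real.exp ((-s * (|x| - R))/2) = Real.exp (μ * R) * Real.exp (-μ * |x|) := by
      rw [← Real.exp_add]
      congr 1
      rw [hμdef]
      ring
    have h5 : ‖w x‖ ≤ Real.sqrt A * (Real.exp (μ * R) * Real.exp (-μ * |x|)) := by
      rw [h1, ← h4, ← h3]
      exact h2
    refine le_trans h5 ?_
    rw [hCdef]
    calc Real.sqrt A * (Real.exp (μ * R) * Real.exp (-μ * |x|))
        ≤ (Real.sqrt A + max M 0 + 1) * (Real.exp (μ * R) * Real.exp (-μ * |x|)) :=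
          mul_le_mul_of_nonneg_right (by linarith [le_max_right M 0])
            (mul_pos (Real.exp_pos _) (Real.exp_pos _)).le
      _ = (Real.sqrt A + max M 0 + 1) * Real.exp (μ * R) * Real.exp (-μ * |x|) := by
          ring
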